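/- For the noiseless mutation dynamics on a single genome with n orders of meta-parameters, x_{t+1}^i = x_t^i + x_t^{i+1} for 0 ≤ i < n and x_{t+1}^n = x_t^n, the fitness after t generations is given exactly by x_t^0 = Σ_{i=0}^{min(n,t)} C(t, i) · x_0^i, where C(t, i) is the binomial coefficient; in particular, if x_0^n > 0 then the fitness x_t^0 grows as a polynomial of degree n in t. -/

import Mathlib

open Finset

/-- A genome with `n` orders of meta-parameters: a vector `(x^0, …, x^n) ∈ ℝ^(n+1)`. -/
abbrev Genome (n : ℕ) := Fin (n + 1) → ℝ

lemma noiseless_general_formula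
    {n : ℕ} (x : ℕ → Genome n)
    (hrec : ∀ t : ℕ, ∀ i : Fin (n + 1), ∀ h : (i : ℕ) < n,
      x (t + 1) i = x t i + x t ⟨(i : ℕ) + 1, Nat.succ_lt_succ h⟩)
    (hlast : ∀ t : ℕ, x (t + 1) (Fin.last n) = x t (Fin.last n)) :
    ∀ t : ℕ, ∀ i : Fin (n + 1),
      x t i = ∑ k : Fin (n + 1),
        (if (i : ℕ) ≤ (k : ℕ) then (t.choose ((k : ℕ) - (i : ℕ)) : ℝ) else 0) * x 0 k := by
  intro t
  induction t with
  | zero =>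
    intro i
    rw [Finset.sum_eq_single i]
    · simp
    · intro k _ hk
      rcases le_or_gt (i : ℕ) (k : ℕ) with h | h
      · have : (k : ℕ) - (i : ℕ) ≠ 0 := by
          have : (i : ℕ) ≠ (k : ℕ) := fun hc => hk (Fin.ext hc.symm)
          omega
        simp [h, Nat.choose_eq_zero_of_lt (by omega : 0 < (k : ℕ) - (i : ℕ))]
      · simp [Nat.not_le.mpr h]
    · simp
  | succ t ih =>
    intro i
    rcases lt_or_ge (i : ℕ) n with hi | hi
    · rw [hrec t i hi, ih i, ih ⟨(i : ℕ) + 1, by omega⟩, ← Finset.sum_add_distrib]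
      apply Finset.sum_congr rfl
      intro k _
      rw [← add_mul]
      congr 1
      rcases lt_or_ge (k : ℕ) (i : ℕ) with h | h
      · simp [Nat.not_le.mpr h, Nat.not_le.mpr (by omega : (k : ℕ) < (i : ℕ) + 1)]
      · rcases eq_or_lt_of_le h with h' | h'
        · simp [← h', Nat.not_le.mpr (by simp : (i : ℕ) < (i : ℕ) + 1)]
        · have h1 : (i : ℕ) ≤ (k : ℕ) := h
          have h2 : (i : ℕ) + 1 ≤ (k : ℕ) := h'
          simp only [h1, h2, if_true]
          have hk : (k : ℕ) - (i : ℕ) = ((k : ℕ) - ((i : ℕ) + 1)) + 1 := by omega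
          rw [hk, Nat.choose_succ_succ]
          push_cast
          ring
    · have hi' : i = Fin.last n := by
        apply Fin.ext; simpa [Fin.last] using le_antisymm (Nat.lt_succ_iff.mp i.isLt) hi
      subst hi'
      rw [hlast t, ih (Fin.last n)]
      apply Finset.sum_congr rfl
      intro k _
      congr 1
      rcases le_or_gt (n : ℕ) (k : ℕ) with h | h
      · have hk : (k : ℕ) = n := le_antisymm (Nat.lt_succ_iff.mp k.isLt) h
        simp [Fin.last, hk]
      · simp [Fin.last, Nat.not_le.mpr h]

/-- For the noiseless mutation dynamics on a single genome with `n` orders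
of meta-parameters, `x_(t+1)^i = x_t^i + x_t^(i+1)` for `0 ≤ i < n` and
`x_(t+1)^n = x_t^n`, the fitness after `t` generations is
`x_t^0 = ∑_(i = 0)^(min(n,t)) C(t, i) · x_0^i`; in particular, if `x_0^n > 0` then the
fitness `x_t^0` grows as a polynomial of degree `n` in `t`. -/
theorem noiseless_fitness_binomial_formula
    {n : ℕ} (x : ℕ → Genome n)
    (hrec : ∀ t : ℕ, ∀ i : Fin (n + 1), ∀ h : (i : ℕ) < n,
      x (t + 1) i = x t i + x t ⟨(i : ℕ) + 1, by omega⟩)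
    (hlast : ∀ t : ℕ, x (t + 1) (Fin.last n) = x t (Fin.last n)) :
    (∀ t : ℕ, x t 0 =
      ∑ i ∈ Finset.univ.filter (fun i : Fin (n + 1) => (i : ℕ) ≤ min n t),
        (t.choose (i : ℕ) : ℝ) * x 0 i) ∧
    (0 < x 0 (Fin.last n) →
      ∃ p : Polynomial ℝ, p.natDegree = n ∧ ∀ t : ℕ, x t 0 = p.eval (t : ℝ)) := by
  have key : ∀ t : ℕ, x t 0 = ∑ k : Fin (n + 1), (t.choose (k : ℕ) : ℝ) * x 0 k := by
    intro t
    rw [noiseless_general_formula x hrec hlast t 0]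
    apply Finset.sum_congr rfl
    intro k _
    simp
  constructor
  · intro t
    rw [key t, Finset.sum_filter]
    apply Finset.sum_congr rfl
    intro k _
    rcases le_or_gt (k : ℕ) (min n t) with h | h
    · simp [h]
    · have hk : t < (k : ℕ) := by
        have := Nat.lt_succ_iff.mp k.isLt
        omega
      simp [Nat.not_le.mpr h, Nat.choose_eq_zero_of_lt hk]
  · intro hpos
    refine ⟨∑ k : Fin (n + 1),
      Polynomial.C (x 0 k / ((k : ℕ).factorial : ℝ)) * descPochhammer ℝ (k : ℕ), ?_, ?_⟩
    · have hcoeff : ∀ k ∈ (Finset.univ : Finset (Fin (n + 1))),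
          (Polynomial.C (x 0 k / ((k : ℕ).factorial : ℝ))
            * descPochhammer ℝ (k : ℕ)).natDegree ≤ n := by
        intro k _
        calc (Polynomial.C (x 0 k / ((k : ℕ).factorial : ℝ))
              * descPochhammer ℝ (k : ℕ)).natDegree
            ≤ _ + _ := Polynomial.natDegree_mul_le
          _ ≤ n := by
              rw [Polynomial.natDegree_C, descPochhammer_natDegree]
              simpa using Nat.lt_succ_iff.mp k.isLt
      apply Polynomial.natDegree_eq_of_le_of_coeff_ne_zero
      · exact Polynomial.natDegree_sum_le_of_forall_le _ _ hcoeff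
      · rw [Polynomial.finset_sum_coeff, Finset.sum_eq_single (Fin.last n)]
        · rw [Polynomial.coeff_C_mul]
          have hm : (descPochhammer ℝ ((Fin.last n : Fin (n+1)) : ℕ)).coeff n = 1 := by
            have := monic_descPochhammer ℝ n
            rw [Polynomial.Monic.def, Polynomial.leadingCoeff, descPochhammer_natDegree] at this
            simpa [Fin.last] using this
          rw [hm, mul_one]
          positivity
        · intro k _ hkn
          rw [Polynomial.coeff_C_mul]
          have hd : (descPochhammer ℝ (k : ℕ)).natDegree < n := by
            rw [descPochhammer_natDegree]
            have h1 := Nat.lt_succ_iff.mp k.isLt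
            have h2 : (k : ℕ) ≠ n := fun hc => hkn (Fin.ext (by simpa [Fin.last] using hc))
            omega
          rw [Polynomial.coeff_eq_zero_of_natDegree_lt hd, mul_zero]
        · simp
    · intro t
      rw [key t, Polynomial.eval_finset_sum]
      apply Finset.sum_congr rfl
      intro k _
      rw [Polynomial.eval_mul, Polynomial.eval_C,
        descPochhammer_eval_eq_descFactorial ℝ t (k : ℕ),
        Nat.descFactorial_eq_factorial_mul_choose]
      have hf : ((k : ℕ).factorial : ℝ) ≠ 0 := by positivity
      push_cast
      field_simp
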